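/- arXiv:2310.12457 — 3 statements merged into one kernel-verified Lean document; each statement's English description precedes it below -/
import Mathlib

section
/- Let G=(V,E) be a graph with n nodes and let m subgraphs (V_1,E_1),...,(V_m,E_m) be sampled independently such that for all s and all nodes u,v, Pr[v∈V_s] = Pr[v∈V_s | u∈V_s] = p, and (i,j)∈E_s iff i∈V_s, j∈V_s, and (i,j)∈E. Define the full-graph energy ℓ(M) = ‖M−F‖_F² + pλ·tr(MᵀLM) + Σ_{i=1}^n ζ(M_i) where L is the graph Laplacian of G and F = f(X;W) is a fixed matrix, and the sampled energy ℓ_muse(M) = Σ_{s=1}^m [ Σ_{v∈V_s}(‖M_v − F_v‖² + ζ(M_v)) + (λ/2)Σ_{(i,j)∈E_s}‖M_i − M_j‖² ]. Then E[ℓ_muse(M)] = m·p·ℓ(M). -/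
/-!
Both energies are sums of indicator variables. A node enters `V_s` with probability `p`, and an
edge `{i, j}` enters `E_s` with probability `Pr[i, j ∈ V_s] = p²`, since adjacent nodes are
distinct. Taking expectations subgraph by subgraph, and writing `tr(Mᵀ L M)` as half the sum of
`‖M_i - M_j‖²` over ordered adjacent pairs, gives `m · p · ℓ(M)`.
-/

open MeasureTheory Finset Matrix

/-- Squared Frobenius norm of a matrix. -/
noncomputable def frobSq {n d : ℕ} (M : Matrix (Fin n) (Fin d) ℝ) : ℝ :=
  ∑ i, ∑ k, (M i k) ^ 2

/-- Squared Euclidean norm of a row vector. -/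
noncomputable def rowSq {d : ℕ} (x : Fin d → ℝ) : ℝ := ∑ k, x k ^ 2

theorem trace_transpose_mul_lapMatrix_mul {V : Type*} [Fintype V] [DecidableEq V]
    (G : SimpleGraph V) [DecidableRel G.Adj] {d : ℕ} (M : Matrix V (Fin d) ℝ) :
    (Mᵀ * G.lapMatrix ℝ * M).trace
      = (∑ i, ∑ j, if G.Adj i j then rowSq (M i - M j) else 0) / 2 := by
  have hcol (k : Fin d) : (Mᵀ * G.lapMatrix ℝ * M) k k
      = (∑ i, ∑ j, if G.Adj i j then (M i k - M j k) ^ 2 else 0) / 2 := by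
    rw [← G.lapMatrix_toLinearMap₂' ℝ (fun i => M i k), toLinearMap₂'_apply',
      Matrix.mul_assoc, mul_apply]
    simp [dotProduct, mulVec, mul_apply]
  simp only [trace, Matrix.diag_apply, hcol, rowSq, Pi.sub_apply]
  rw [← sum_div, sum_comm]
  refine congrArg (· / 2) (sum_congr rfl fun i _ => ?_)
  rw [sum_comm]
  refine sum_congr rfl fun j _ => ?_
  split_ifs <;> simp

theorem sum_adj_and_mem_eq_sum_product {V : Type*} [Fintype V] [DecidableEq V]
    (G : SimpleGraph V) [DecidableRel G.Adj] (S : Finset V) (w : V → V → ℝ) :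
    ∑ i, ∑ j, (if G.Adj i j ∧ i ∈ S ∧ j ∈ S then w i j else 0)
      = ∑ e ∈ S ×ˢ S, if G.Adj e.1 e.2 then w e.1 e.2 else 0 := by
  simp only [and_rotate, ite_and, sum_product, sum_ite_irrel, sum_const_zero, sum_ite_mem,
    univ_inter]

theorem sum_mem_eq_sum_indicator {ι Ω : Type*} [Fintype ι] (S : Ω → Finset ι) (g : ι → ℝ)
    (ω : Ω) : ∑ v ∈ S ω, g v = ∑ v, {ω | v ∈ S ω}.indicator (fun _ => g v) ω := by
  classical
  simp only [Set.indicator_apply, Set.mem_ofPred_eq]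
  rw [sum_ite_mem, univ_inter]

section RandomFinset

variable {ι Ω : Type*} [MeasurableSpace Ω] {S : Ω → Finset ι}

theorem measurableSet_mem_product (hS : ∀ v, MeasurableSet {ω | v ∈ S ω}) (e : ι × ι) :
    MeasurableSet {ω | e ∈ S ω ×ˢ S ω} := by
  simpa only [mem_product, Set.ofPred_and] using (hS e.1).inter (hS e.2)

variable [Fintype ι] (μ : Measure Ω) [IsFiniteMeasure μ] (hS : ∀ v, MeasurableSet {ω | v ∈ S ω})
include hS

theorem integrable_sum_mem (g : ι → ℝ) : Integrable (fun ω => ∑ v ∈ S ω, g v) μ := by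
  rw [funext (sum_mem_eq_sum_indicator S g)]
  exact integrable_finsetSum _ fun v _ => (integrable_const (g v)).indicator (hS v)

theorem integral_sum_mem (g : ι → ℝ) :
    ∫ ω, ∑ v ∈ S ω, g v ∂μ = ∑ v, μ.real {ω | v ∈ S ω} * g v := by
  rw [funext (sum_mem_eq_sum_indicator S g),
    integral_finsetSum _ fun v _ => (integrable_const (g v)).indicator (hS v)]
  simp [integral_indicator_const _ (hS _)]

variable [DecidableEq ι] (G : SimpleGraph ι) [DecidableRel G.Adj] (w : ι → ι → ℝ)

theorem integrable_sum_adj_and_mem :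
    Integrable (fun ω => ∑ i, ∑ j, if G.Adj i j ∧ i ∈ S ω ∧ j ∈ S ω then w i j else 0) μ := by
  simp only [sum_adj_and_mem_eq_sum_product]
  exact integrable_sum_mem μ (measurableSet_mem_product hS) _

/-- Edges are sampled with probability `p²` because their endpoints are distinct. -/
theorem integral_sum_adj_and_mem {p : ℝ} (hmarg : ∀ v, μ.real {ω | v ∈ S ω} = p)
    (hcond : ∀ u v, u ≠ v →
      μ.real ({ω | v ∈ S ω} ∩ {ω | u ∈ S ω}) = p * μ.real {ω | u ∈ S ω}) :
    ∫ ω, (∑ i, ∑ j, if G.Adj i j ∧ i ∈ S ω ∧ j ∈ S ω then w i j else 0) ∂μ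
      = p ^ 2 * ∑ i, ∑ j, if G.Adj i j then w i j else 0 := by
  have hedge {i j : ι} (hij : G.Adj i j) : μ.real {ω | (i, j) ∈ S ω ×ˢ S ω} = p ^ 2 := by
    have : {ω | (i, j) ∈ S ω ×ˢ S ω} = {ω | j ∈ S ω} ∩ {ω | i ∈ S ω} := by
      ext; simp [and_comm]
    rw [this, hcond i j hij.ne, hmarg, sq]
  simp only [sum_adj_and_mem_eq_sum_product]
  rw [integral_sum_mem μ (measurableSet_mem_product hS), ← univ_product_univ, sum_product,
    mul_sum]
  refine sum_congr rfl fun i _ => ?_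
  rw [mul_sum]
  refine sum_congr rfl fun j _ => ?_
  split_ifs with hij
  · rw [hedge hij]
  · simp

end RandomFinset

theorem stmt0_general
    {n m d : ℕ} (G : SimpleGraph (Fin n)) [DecidableRel G.Adj]
    {Ω : Type} [MeasurableSpace Ω] (μ : Measure Ω) [IsProbabilityMeasure μ]
    (Vs : Fin m → Ω → Finset (Fin n))
    (p lam : ℝ)
    (hmeas : ∀ s v, MeasurableSet {ω | v ∈ Vs s ω})
    -- marginal probability of each node being sampled is p
    (hmarg : ∀ s v, (μ {ω | v ∈ Vs s ω}).toReal = p)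
    -- conditional probability Pr[v ∈ V_s | u ∈ V_s] = p, i.e. joint = p·marginal
    (hcond : ∀ s (u v : Fin n), u ≠ v →
      (μ ({ω | v ∈ Vs s ω} ∩ {ω | u ∈ Vs s ω})).toReal
        = p * (μ {ω | u ∈ Vs s ω}).toReal)
    (M F : Matrix (Fin n) (Fin d) ℝ) (ζ : (Fin d → ℝ) → ℝ)
    -- L is the graph Laplacian D - A of G
    (L : Matrix (Fin n) (Fin n) ℝ)
    (hL : L = Matrix.diagonal (fun v => (G.degree v : ℝ)) - G.adjMatrix ℝ)
    -- full-graph energy, with λ rescaled to p·λ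
    (ℓ : ℝ)
    (hℓ : ℓ = frobSq (M - F) + p * lam * (Mᵀ * L * M).trace + ∑ v, ζ (M v))
    -- sampled energy with induced edges
    (ℓmuse : Ω → ℝ)
    (hmuse : ∀ ω, ℓmuse ω = ∑ s : Fin m,
      ((∑ v ∈ Vs s ω, (rowSq (M v - F v) + ζ (M v)))
        + (lam / 2) * ∑ i, ∑ j,
            (if G.Adj i j ∧ i ∈ Vs s ω ∧ j ∈ Vs s ω
              then rowSq (M i - M j) else 0))) :
    ∫ ω, ℓmuse ω ∂μ = m * p * ℓ := by
  have hnodes s : ∫ ω, ∑ v ∈ Vs s ω, (rowSq (M v - F v) + ζ (M v)) ∂μ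
      = p * (frobSq (M - F) + ∑ v, ζ (M v)) := by
    simp only [integral_sum_mem μ (hmeas s), measureReal_def, hmarg, ← mul_sum]
    exact congrArg (p * ·) sum_add_distrib
  have hsubgraph s : ∫ ω, ((∑ v ∈ Vs s ω, (rowSq (M v - F v) + ζ (M v)))
      + lam / 2 * ∑ i, ∑ j, if G.Adj i j ∧ i ∈ Vs s ω ∧ j ∈ Vs s ω then rowSq (M i - M j) else 0) ∂μ
      = p * (frobSq (M - F) + ∑ v, ζ (M v))
        + lam / 2 * (p ^ 2 * ∑ i, ∑ j, if G.Adj i j then rowSq (M i - M j) else 0) := by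
    rw [integral_add (integrable_sum_mem μ (hmeas s) _)
      ((integrable_sum_adj_and_mem μ (hmeas s) G _).const_mul _), integral_const_mul, hnodes,
      integral_sum_adj_and_mem μ (hmeas s) G _ (hmarg s) (hcond s)]
  rw [show ℓmuse = _ from funext hmuse, integral_finsetSum]
  · simp only [hsubgraph, sum_const, card_univ, Fintype.card_fin, nsmul_eq_mul]
    rw [hℓ, hL, ← SimpleGraph.degMatrix, ← SimpleGraph.lapMatrix,
      trace_transpose_mul_lapMatrix_mul]
    ring
  · exact fun s _ => (integrable_sum_mem μ (hmeas s) _).add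
      ((integrable_sum_adj_and_mem μ (hmeas s) G _).const_mul _)

/-- expectation of the sampled energy equals `m·p` times the
full-graph energy (with `λ` rescaled to `p·λ`). -/
theorem stmt0
    {n m d : ℕ} (G : SimpleGraph (Fin n)) [DecidableRel G.Adj]
    {Ω : Type} [MeasurableSpace Ω] (μ : Measure Ω) [IsProbabilityMeasure μ]
    (Vs : Fin m → Ω → Finset (Fin n))
    (p lam : ℝ) (hp : 0 ≤ p) (hlam : 0 < lam)
    (hmeas : ∀ s v, MeasurableSet {ω | v ∈ Vs s ω})
    -- marginal probability of each node being sampled is p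
    (hmarg : ∀ s v, (μ {ω | v ∈ Vs s ω}).toReal = p)
    -- conditional probability Pr[v ∈ V_s | u ∈ V_s] = p, i.e. joint = p·marginal
    (hcond : ∀ s (u v : Fin n), u ≠ v →
      (μ ({ω | v ∈ Vs s ω} ∩ {ω | u ∈ Vs s ω})).toReal
        = p * (μ {ω | u ∈ Vs s ω}).toReal)
    (M F : Matrix (Fin n) (Fin d) ℝ) (ζ : (Fin d → ℝ) → ℝ)
    -- L is the graph Laplacian D - A of G
    (L : Matrix (Fin n) (Fin n) ℝ)
    (hL : L = Matrix.diagonal (fun v => (G.degree v : ℝ)) - G.adjMatrix ℝ)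
    -- full-graph energy, with λ rescaled to p·λ
    (ℓ : ℝ)
    (hℓ : ℓ = frobSq (M - F) + p * lam * (Mᵀ * L * M).trace + ∑ v, ζ (M v))
    -- sampled energy with induced edges
    (ℓmuse : Ω → ℝ)
    (hmuse : ∀ ω, ℓmuse ω = ∑ s : Fin m,
      ((∑ v ∈ Vs s ω, (rowSq (M v - F v) + ζ (M v)))
        + (lam / 2) * ∑ i, ∑ j,
            (if G.Adj i j ∧ i ∈ Vs s ω ∧ j ∈ Vs s ω
              then rowSq (M i - M j) else 0))) :
    ∫ ω, ℓmuse ω ∂μ = m * p * ℓ :=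
  stmt0_general G μ Vs p lam hmeas hmarg hcond M F ζ L hL ℓ hℓ ℓmuse hmuse
end

section
/- (Four-point property) With ℓ_muse(𝐘, M) = Σ_s [‖Y_s − F_s‖_F² + λ·tr(Y_sᵀL_sY_s) + γ‖Y_s − μ_s‖_F²] and with M^{(k)} the exact mean minimizer given 𝐘^{(k)} (so that Σ_s⟨μ_s − μ_s^{(k)}, μ_s^{(k)} − Y_s^{(k)}⟩ = 0 for every M), it holds for all 𝐘 and all M that (1+γ)Σ_s‖Y_s − Y_s^{(k)}‖_F² ≥ ℓ_muse(𝐘, M^{(k)}) − ℓ_muse(𝐘, M). Equivalently, the stronger inequality Σ_s‖Y_s − Y_s^{(k)}‖_F² ≥ Σ_s(‖Y_s − μ_s^{(k)}‖_F² − ‖Y_s − μ_s‖_F²) holds. -/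
/-!
Writing `Y - Yᵏ = (Y - μ) + (μ - μᵏ) + (μᵏ - Yᵏ)` row by row gives
`‖Y - Yᵏ‖² = ‖Y - μᵏ‖² - ‖Y - μ‖² + ‖(Y - μ) + (μᵏ - Yᵏ)‖² + 2⟪μ - μᵏ, μᵏ - Yᵏ⟫`.
Summed over all rows the cross term vanishes, since `μᵏ_v` is the mean of the rows of `Yᵏ`
assigned to `v`, and the remaining square is nonnegative. The loss difference is `γ` times the
right-hand side of the stronger inequality, so the weaker one follows from `γ ≥ 0`.
-/

open Finset

open scoped RealInnerProductSpace

section FourPoint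

variable {E : Type*} [NormedAddCommGroup E] [InnerProductSpace ℝ E]

theorem norm_sub_sq_eq_four_point (y yk μ μk : E) :
    ‖y - yk‖ ^ 2 = ‖y - μk‖ ^ 2 - ‖y - μ‖ ^ 2 + ‖(y - μ) + (μk - yk)‖ ^ 2
      + 2 * ⟪μ - μk, μk - yk⟫ := by
  have h₁ := norm_add_sq_real ((y - μ) + (μ - μk)) (μk - yk)
  have h₂ := norm_add_sq_real (y - μ) (μ - μk)
  have h₃ := norm_add_sq_real (y - μ) (μk - yk)
  rw [inner_add_left] at h₁
  rw [show y - μ + (μ - μk) + (μk - yk) = y - yk by abel] at h₁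
  rw [show y - μ + (μ - μk) = y - μk by abel] at h₁ h₂
  linarith

variable {ι κ : Type*} [Fintype ι] [Fintype κ] [DecidableEq κ]

theorem sum_inner_sub_eq_zero_of_sum_fiber_sub_eq_zero (p : ι → κ) (y : ι → E) (μ : κ → E)
    (hμ : ∀ v, ∑ i with p i = v, (μ v - y i) = 0) (c : κ → E) :
    ∑ i, ⟪c (p i), μ (p i) - y i⟫ = 0 := by
  rw [← sum_fiberwise univ p]
  refine sum_eq_zero fun v _ => ?_
  calc ∑ i with p i = v, ⟪c (p i), μ (p i) - y i⟫
      = ∑ i with p i = v, ⟪c v, μ v - y i⟫ :=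
        sum_congr rfl fun i hi => by rw [(mem_filter.1 hi).2]
    _ = 0 := by rw [← inner_sum, hμ, inner_zero_right]

theorem sum_norm_sub_sq_sub_le_of_sum_fiber_sub_eq_zero (p : ι → κ) (y yk : ι → E)
    (μ μk : κ → E) (hμk : ∀ v, ∑ i with p i = v, (μk v - yk i) = 0) :
    ∑ i, (‖y i - μk (p i)‖ ^ 2 - ‖y i - μ (p i)‖ ^ 2) ≤ ∑ i, ‖y i - yk i‖ ^ 2 := by
  have horth := sum_inner_sub_eq_zero_of_sum_fiber_sub_eq_zero p yk μk hμk (fun v => μ v - μk v)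
  calc ∑ i, (‖y i - μk (p i)‖ ^ 2 - ‖y i - μ (p i)‖ ^ 2)
      ≤ ∑ i, (‖y i - μk (p i)‖ ^ 2 - ‖y i - μ (p i)‖ ^ 2
            + ‖(y i - μ (p i)) + (μk (p i) - yk i)‖ ^ 2)
          + 2 * ∑ i, ⟪μ (p i) - μk (p i), μk (p i) - yk i⟫ := by
        rw [horth, mul_zero, add_zero]
        exact sum_le_sum fun i _ => le_add_of_nonneg_right (sq_nonneg _)
    _ = ∑ i, ‖y i - yk i‖ ^ 2 := by
        rw [mul_sum, ← sum_add_distrib]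
        exact sum_congr rfl fun i _ => (norm_sub_sq_eq_four_point _ _ _ _).symm

end FourPoint

theorem sum_sub_eq_zero_of_eq_inv_card_smul_sum {ι E : Type*} [AddCommGroup E] [Module ℝ E]
    (s : Finset ι) (y : ι → E) (μ : E) (hμ : μ = (#s : ℝ)⁻¹ • ∑ i ∈ s, y i) :
    ∑ i ∈ s, (μ - y i) = 0 := by
  rcases s.eq_empty_or_nonempty with rfl | hs
  · simp
  · rw [sum_sub_distrib, sum_const, hμ, ← Nat.cast_smul_eq_nsmul ℝ, smul_smul,
      mul_inv_cancel₀ (by exact_mod_cast hs.card_pos.ne'), one_smul, sub_self]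

theorem rowSq_eq_norm_sq {d : ℕ} (x : Fin d → ℝ) : rowSq x = ‖WithLp.toLp 2 x‖ ^ 2 := by
  rw [EuclideanSpace.real_norm_sq_eq]; rfl

theorem stmt8_general {m n d : ℕ} (ns : Fin m → ℕ)
    (I : (s : Fin m) → Fin (ns s) → Fin n)
    (Fs : (s : Fin m) → Fin (ns s) → Fin d → ℝ)
    (Ls : (s : Fin m) → Matrix (Fin (ns s)) (Fin (ns s)) ℝ)
    (lam γ : ℝ) (hγ : 0 ≤ γ)
    (ℓ : ((s : Fin m) → Fin (ns s) → Fin d → ℝ) → (Fin n → Fin d → ℝ) → ℝ)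
    (hℓ : ∀ Y M, ℓ Y M = ∑ s,
      ((∑ i, rowSq (Y s i - Fs s i))
        + lam * (∑ i, ∑ j, Ls s i j * ∑ k, Y s i k * Y s j k)
        + γ * ∑ i, rowSq (Y s i - M (I s i))))
    (Yk : (s : Fin m) → Fin (ns s) → Fin d → ℝ)
    (r : Fin n → ℕ)
    (hr : ∀ v, r v = ∑ s, ({i | I s i = v} : Finset (Fin (ns s))).card)
    (Mk : Fin n → Fin d → ℝ)
    (hMk : ∀ v, Mk v
        = (r v : ℝ)⁻¹ • ∑ s, ∑ i ∈ ({i | I s i = v} : Finset (Fin (ns s))), Yk s i) :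
    ∀ (Y : (s : Fin m) → Fin (ns s) → Fin d → ℝ) (M : Fin n → Fin d → ℝ),
      ((1 + γ) * ∑ s, ∑ i, rowSq (Y s i - Yk s i) ≥ ℓ Y Mk - ℓ Y M)
      ∧ (∑ s, ∑ i, rowSq (Y s i - Yk s i)
          ≥ ∑ s, ((∑ i, rowSq (Y s i - Mk (I s i)))
              - ∑ i, rowSq (Y s i - M (I s i)))) := by
  intro Y M
  have hmean : ∀ v, ∑ x : (s : Fin m) × Fin (ns s) with I x.1 x.2 = v,
      (WithLp.toLp 2 (Mk v) - WithLp.toLp 2 (Yk x.1 x.2)) = 0 := by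
    intro v
    simp only [← WithLp.toLp_sub, ← WithLp.toLp_sum]
    rw [sum_sub_eq_zero_of_eq_inv_card_smul_sum _ _ _ ?_, WithLp.toLp_zero]
    rw [hMk, hr, ← univ_sigma_univ, filter_sigma, card_sigma, sum_sigma]
  have hsecond : ∑ s, ((∑ i, rowSq (Y s i - Mk (I s i))) - ∑ i, rowSq (Y s i - M (I s i)))
      ≤ ∑ s, ∑ i, rowSq (Y s i - Yk s i) := by
    simpa only [← WithLp.toLp_sub, ← rowSq_eq_norm_sq, Fintype.sum_sigma, sum_sub_distrib] using
      sum_norm_sub_sq_sub_le_of_sum_fiber_sub_eq_zero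
        (fun x : (s : Fin m) × Fin (ns s) => I x.1 x.2)
        (fun x => WithLp.toLp 2 (Y x.1 x.2)) (fun x => WithLp.toLp 2 (Yk x.1 x.2))
        (fun v => WithLp.toLp 2 (M v)) (fun v => WithLp.toLp 2 (Mk v)) hmean
  have hdiff : ℓ Y Mk - ℓ Y M
      = γ * ∑ s, ((∑ i, rowSq (Y s i - Mk (I s i))) - ∑ i, rowSq (Y s i - M (I s i))) := by
    rw [hℓ, hℓ, ← sum_sub_distrib, mul_sum]
    exact sum_congr rfl fun s _ => by ring
  have hnonneg : 0 ≤ ∑ s, ∑ i, rowSq (Y s i - Yk s i) := by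
    simp only [rowSq_eq_norm_sq]
    positivity
  refine ⟨?_, hsecond⟩
  rw [ge_iff_le, hdiff]
  linarith [mul_le_mul_of_nonneg_left hsecond hγ]

/-- four-point property: with `M^{(k)}` the exact nodewise-mean
minimizer given `𝐘^{(k)}`, for all `𝐘` and all `M`,
`(1+γ)Σ_s‖Y_s − Y_s^{(k)}‖² ≥ ℓ_muse(𝐘, M^{(k)}) − ℓ_muse(𝐘, M)`, and the
stronger inequality `Σ_s‖Y_s − Y_s^{(k)}‖² ≥ Σ_s(‖Y_s − μ_s^{(k)}‖² − ‖Y_s − μ_s‖²)`. -/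
theorem stmt8 {m n d : ℕ} (ns : Fin m → ℕ)
    (I : (s : Fin m) → Fin (ns s) → Fin n)
    (Fs : (s : Fin m) → Fin (ns s) → Fin d → ℝ)
    (Ls : (s : Fin m) → Matrix (Fin (ns s)) (Fin (ns s)) ℝ)
    (hLs : ∀ s, (Ls s).PosSemidef)
    (lam γ : ℝ) (hlam : 0 < lam) (hγ : 0 ≤ γ)
    (ℓ : ((s : Fin m) → Fin (ns s) → Fin d → ℝ) → (Fin n → Fin d → ℝ) → ℝ)
    (hℓ : ∀ Y M, ℓ Y M = ∑ s,
      ((∑ i, rowSq (Y s i - Fs s i))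
        + lam * (∑ i, ∑ j, Ls s i j * ∑ k, Y s i k * Y s j k)
        + γ * ∑ i, rowSq (Y s i - M (I s i))))
    (Yk : (s : Fin m) → Fin (ns s) → Fin d → ℝ)
    (r : Fin n → ℕ)
    (hr : ∀ v, r v = ∑ s, ({i | I s i = v} : Finset (Fin (ns s))).card)
    (Mk : Fin n → Fin d → ℝ)
    (hMk : ∀ v, Mk v
        = (r v : ℝ)⁻¹ • ∑ s, ∑ i ∈ ({i | I s i = v} : Finset (Fin (ns s))), Yk s i) :
    ∀ (Y : (s : Fin m) → Fin (ns s) → Fin d → ℝ) (M : Fin n → Fin d → ℝ),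
      ((1 + γ) * ∑ s, ∑ i, rowSq (Y s i - Yk s i) ≥ ℓ Y Mk - ℓ Y M)
      ∧ (∑ s, ∑ i, rowSq (Y s i - Yk s i)
          ≥ ∑ s, ((∑ i, rowSq (Y s i - Mk (I s i)))
              - ∑ i, rowSq (Y s i - M (I s i)))) :=
  stmt8_general ns I Fs Ls lam γ hγ ℓ hℓ Yk r hr Mk hMk
end

section
/- (Lower-level alternating-minimization convergence) Let ℓ(𝐘, M) = Σ_{s=1}^m [‖Y_s − F_s‖_F² + λ·tr(Y_sᵀL_sY_s) + γ‖Y_s − μ_s(M)‖_F²] with λ > 0, γ ≥ 0, L_s symmetric PSD, F_s fixed, where μ_s(M) selects rows of M via the index map I. Define the alternating sequence 𝐘^{(k)} = argmin_𝐘 ℓ(𝐘, M^{(k-1)}) and M^{(k)} = argmin_M ℓ(𝐘^{(k)}, M), from arbitrary initialization. Then lim_{k→∞} ℓ(𝐘^{(k)}, M^{(k)}) = inf_{𝐘,M} ℓ(𝐘, M). -/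
/-!
Write the energy as `ℓ(𝐘, M) = N(𝐘 - F) + λ Λ(𝐘) + γ N(𝐘 - P M)`, where `N` is the squared
Frobenius norm, `Λ` the (positive semidefinite) block Laplacian form and `P` the row selection
`M ↦ μ(M)`. Along any line `ℓ` is a quadratic polynomial, whose linear coefficient vanishes at a
minimizer. In the `𝐘`-step this gives the three-point property
`ℓ(𝐘, M_k) ≥ ℓ(𝐘_{k+1}, M_k) + (1 + γ) N(𝐘 - 𝐘_{k+1})`; in the `M`-step it makes `P M_k` an
`N`-orthogonal projection of `𝐘_k` onto the range of `P`, whence the four-point property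
`ℓ(𝐘, M_k) ≤ ℓ(𝐘, M) + γ N(𝐘 - 𝐘_k)`.

As in Csiszár–Tusnády, the values `ℓ(𝐘_k, M_k)` decrease, and if their limit exceeded some
`ℓ(𝐘, M)` by `ε > 0`, the two properties together would make the nonnegative numbers
`(1 + γ) N(𝐘 - 𝐘_k)` drop by at least `ε` at every step.
-/

open Finset Filter

open QuadraticMap (polar)

theorem eq_zero_of_forall_le_quadratic {f : ℝ → ℝ} {a b c : ℝ}
    (hf : ∀ t, f t = a + t * b + t ^ 2 * c) (hmin : ∀ t, a ≤ f t) : b = 0 := by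
  have := discrim_le_zero (a := c) (b := b) (c := 0) fun t => by linarith [hf t, hmin t]
  rw [discrim] at this
  nlinarith [sq_nonneg b]

theorem QuadraticMap.map_add_smul {R M : Type*} [CommRing R] [AddCommGroup M] [Module R M]
    (Q : QuadraticMap R M R) (x y : M) (t : R) :
    Q (x + t • y) = Q x + t * polar Q x y + t ^ 2 * Q y := by
  rw [QuadraticMap.map_add (⇑Q), QuadraticMap.map_smul, QuadraticMap.polar_smul_right,
    smul_eq_mul, smul_eq_mul]
  ring

theorem tendsto_sInf_of_three_point_of_four_point {α β : Type*} (ℓ : α → β → ℝ)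
    (δ : α → α → ℝ) (x : ℕ → α) (M : ℕ → β)
    (hbdd : BddBelow (Set.range fun p : α × β => ℓ p.1 p.2)) (hδ : ∀ y y', 0 ≤ δ y y')
    (hM : ∀ k M', ℓ (x (k + 1)) (M (k + 1)) ≤ ℓ (x (k + 1)) M')
    (three : ∀ k y, ℓ (x (k + 1)) (M k) + δ y (x (k + 1)) ≤ ℓ y (M k))
    (four : ∀ k y M', ℓ y (M (k + 1)) ≤ ℓ y M' + δ y (x (k + 1))) :
    Tendsto (fun k => ℓ (x k) (M k)) atTop
      (nhds (sInf (Set.range fun p : α × β => ℓ p.1 p.2))) := by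
  set a := fun k => ℓ (x k) (M k)
  have ha : BddBelow (Set.range a) :=
    hbdd.mono (Set.range_subset_iff.2 fun k => Set.mem_range_self (x k, M k))
  have anti : Antitone a := antitone_nat_of_succ_le fun k =>
    (hM k (M k)).trans ((le_add_of_nonneg_right (hδ _ _)).trans (three k (x k)))
  suffices h : ⨅ k, a k = sInf (Set.range fun p : α × β => ℓ p.1 p.2) from
    h ▸ tendsto_atTop_ciInf anti ha
  refine le_antisymm (le_csInf ⟨_, Set.mem_range_self (x 0, M 0)⟩ ?_)
    (le_ciInf fun k => csInf_le hbdd ⟨(x k, M k), rfl⟩)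
  rintro _ ⟨⟨y, M'⟩, rfl⟩
  set L := ⨅ k, a k
  set e := fun k => δ y (x (k + 1))
  have step : ∀ k, L - ℓ y M' ≤ e k - e (k + 1) := fun k => by
    linarith [ciInf_le ha (k + 2), hM (k + 1) (M (k + 1)), three (k + 1) y, four k y M']
  have telescope : ∀ n : ℕ, n * (L - ℓ y M') ≤ e 0 := fun n =>
    calc n * (L - ℓ y M')
        _ = ∑ k ∈ range n, (L - ℓ y M') := by rw [sum_const, card_range, nsmul_eq_mul]
        _ ≤ ∑ k ∈ range n, (e k - e (k + 1)) := sum_le_sum fun k _ => step k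
        _ = e 0 - e n := sum_range_sub' e n
        _ ≤ e 0 := sub_le_self _ (hδ _ _)
  by_contra! hlt
  obtain ⟨n, hn⟩ := exists_nat_gt (e 0 / (L - ℓ y M'))
  rw [div_lt_iff₀ (sub_pos.2 hlt)] at hn
  linarith [telescope n]

section QuadraticEnergy

variable {V B : Type*} [AddCommGroup V] [Module ℝ V] [AddCommGroup B] [Module ℝ B]
  (N Λ : QuadraticForm ℝ V) (P : B →ₗ[ℝ] V) (F : V) (lam γ : ℝ)

def quadEnergy (y : V) (M : B) : ℝ :=
  N (y - F) + lam * Λ y + γ * N (y - P M)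

variable {N Λ P F lam γ}

theorem quadEnergy_nonneg (hN : ∀ v, 0 ≤ N v) (hΛ : ∀ v, 0 ≤ Λ v) (hlam : 0 ≤ lam)
    (hγ : 0 ≤ γ) (y : V) (M : B) : 0 ≤ quadEnergy N Λ P F lam γ y M :=
  add_nonneg (add_nonneg (hN _) (mul_nonneg hlam (hΛ _))) (mul_nonneg hγ (hN _))

theorem quadEnergy_three_point (hΛ : ∀ v, 0 ≤ Λ v) (hlam : 0 ≤ lam) {M : B} {y₀ : V}
    (hmin : ∀ y, quadEnergy N Λ P F lam γ y₀ M ≤ quadEnergy N Λ P F lam γ y M) (y : V) :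
    quadEnergy N Λ P F lam γ y₀ M + (1 + γ) * N (y - y₀) ≤ quadEnergy N Λ P F lam γ y M := by
  set d := y - y₀
  have expand : ∀ t : ℝ, quadEnergy N Λ P F lam γ (y₀ + t • d) M = quadEnergy N Λ P F lam γ y₀ M
      + t * (polar N (y₀ - F) d + lam * polar Λ y₀ d + γ * polar N (y₀ - P M) d)
      + t ^ 2 * (N d + lam * Λ d + γ * N d) := fun t => by
    simp only [quadEnergy, add_sub_right_comm y₀ (t • d), QuadraticMap.map_add_smul]
    ring
  have first_order := eq_zero_of_forall_le_quadratic expand fun t => hmin _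
  have := expand 1
  rw [one_smul, add_sub_cancel, first_order] at this
  linarith [mul_nonneg hlam (hΛ d)]

theorem QuadraticForm.four_point (hN : ∀ v, 0 ≤ N v) {x : V} {M₀ : B}
    (hmin : ∀ M, N (x - P M₀) ≤ N (x - P M)) (y : V) (M : B) :
    N (y - P M₀) ≤ N (y - P M) + N (y - x) := by
  set w := P M - P M₀
  have orthogonal : polar N (x - P M₀) w = 0 :=
    eq_zero_of_forall_le_quadratic (N.map_add_smul (x - P M₀) w) fun t => by
      convert hmin (M₀ - t • (M - M₀)) using 2
      simp [w]
      abel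
  have split : polar N (y - P M₀) w = polar N (y - x) w + polar N (x - P M₀) w := by
    rw [← QuadraticMap.polar_add_left, sub_add_sub_cancel]
  have h₁ := N.map_add_smul (y - P M₀) w (-1)
  have h₂ := N.map_add_smul (y - x) w (-1)
  rw [show y - P M₀ + (-1 : ℝ) • w = y - P M by simp [w]] at h₁
  -- the slack is `N ((y - x) - w) ≥ 0`
  linarith [hN (y - x + (-1 : ℝ) • w)]

theorem quadEnergy_four_point (hN : ∀ v, 0 ≤ N v) (hγ : 0 ≤ γ) {x : V} {M₀ : B}
    (hmin : ∀ M, quadEnergy N Λ P F lam γ x M₀ ≤ quadEnergy N Λ P F lam γ x M) (y : V) (M : B) :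
    quadEnergy N Λ P F lam γ y M₀ ≤ quadEnergy N Λ P F lam γ y M + γ * N (y - x) := by
  rcases hγ.eq_or_lt with rfl | hγ
  · simp [quadEnergy]
  have hproj : ∀ M, N (x - P M₀) ≤ N (x - P M) := fun M =>
    le_of_mul_le_mul_left (by simpa [quadEnergy] using hmin M) hγ
  have := mul_le_mul_of_nonneg_left (N.four_point hN hproj y M) hγ.le
  simp only [quadEnergy]
  linarith

theorem tendsto_quadEnergy_alternating (hN : ∀ v, 0 ≤ N v) (hΛ : ∀ v, 0 ≤ Λ v)
    (hlam : 0 ≤ lam) (hγ : 0 ≤ γ) (Y : ℕ → V) (M : ℕ → B)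
    (hY : ∀ k y, quadEnergy N Λ P F lam γ (Y (k + 1)) (M k) ≤ quadEnergy N Λ P F lam γ y (M k))
    (hM : ∀ k M', quadEnergy N Λ P F lam γ (Y (k + 1)) (M (k + 1))
      ≤ quadEnergy N Λ P F lam γ (Y (k + 1)) M') :
    Tendsto (fun k => quadEnergy N Λ P F lam γ (Y k) (M k)) atTop
      (nhds (sInf (Set.range fun p : V × B => quadEnergy N Λ P F lam γ p.1 p.2))) :=
  tendsto_sInf_of_three_point_of_four_point _ (fun y x => (1 + γ) * N (y - x)) Y M
    ⟨0, Set.forall_mem_range.2 fun _ => quadEnergy_nonneg hN hΛ hlam hγ _ _⟩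
    (fun _ _ => mul_nonneg (by linarith) (hN _)) hM
    (fun k => quadEnergy_three_point hΛ hlam (hY k))
    (fun k y M' => (quadEnergy_four_point hN hγ (hM k) y M').trans
      (by gcongr; exacts [hN _, by linarith]))

end QuadraticEnergy

section SubgraphEmbeddings

variable {m d : ℕ} {ns : Fin m → ℕ}

noncomputable def frobeniusSq : QuadraticForm ℝ ((s : Fin m) → Fin (ns s) → Fin d → ℝ) :=
  QuadraticMap.pi fun _ => QuadraticMap.pi fun _ => QuadraticMap.pi fun _ => QuadraticMap.sq

theorem frobeniusSq_apply (Y : (s : Fin m) → Fin (ns s) → Fin d → ℝ) :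
    frobeniusSq Y = ∑ s, ∑ i, rowSq (Y s i) := by
  simp [frobeniusSq, QuadraticMap.pi_apply, rowSq, sq]

theorem frobeniusSq_nonneg (Y : (s : Fin m) → Fin (ns s) → Fin d → ℝ) : 0 ≤ frobeniusSq Y := by
  rw [frobeniusSq_apply]
  exact sum_nonneg fun _ _ => sum_nonneg fun _ _ => sum_nonneg fun _ _ => sq_nonneg _

noncomputable def laplacianForm (Ls : (s : Fin m) → Matrix (Fin (ns s)) (Fin (ns s)) ℝ) :
    QuadraticForm ℝ ((s : Fin m) → Fin (ns s) → Fin d → ℝ) :=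
  QuadraticMap.pi fun s => ∑ k : Fin d,
    (Ls s).toQuadraticForm'.comp ((LinearMap.proj k).compLeft (Fin (ns s)))

theorem laplacianForm_apply (Ls : (s : Fin m) → Matrix (Fin (ns s)) (Fin (ns s)) ℝ)
    (Y : (s : Fin m) → Fin (ns s) → Fin d → ℝ) :
    laplacianForm Ls Y = ∑ s, ∑ i, ∑ j, Ls s i j * ∑ k, Y s i k * Y s j k := by
  simp only [laplacianForm, QuadraticMap.pi_apply, _root_.sum_apply, QuadraticMap.comp_apply,
    Matrix.toQuadraticForm', LinearMap.BilinMap.toQuadraticMap_apply, Matrix.toLinearMap₂'_apply',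
    LinearMap.compLeft_apply, Function.comp_apply, LinearMap.proj_apply, dotProduct,
    Matrix.mulVec, mul_sum]
  refine sum_congr rfl fun s _ => ?_
  rw [sum_comm]
  refine sum_congr rfl fun i _ => ?_
  rw [sum_comm]
  exact sum_congr rfl fun j _ => sum_congr rfl fun k _ => by ring

theorem laplacianForm_nonneg {Ls : (s : Fin m) → Matrix (Fin (ns s)) (Fin (ns s)) ℝ}
    (hLs : ∀ s, (Ls s).PosSemidef) (Y : (s : Fin m) → Fin (ns s) → Fin d → ℝ) :
    0 ≤ laplacianForm Ls Y := by
  simp only [laplacianForm, QuadraticMap.pi_apply, _root_.sum_apply, QuadraticMap.comp_apply,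
    Matrix.toQuadraticForm', LinearMap.BilinMap.toQuadraticMap_apply, Matrix.toLinearMap₂'_apply']
  exact sum_nonneg fun s _ => sum_nonneg fun k _ => by
    simpa using (hLs s).dotProduct_mulVec_nonneg _

def selectRows {n : ℕ} (I : (s : Fin m) → Fin (ns s) → Fin n) :
    (Fin n → Fin d → ℝ) →ₗ[ℝ] (s : Fin m) → Fin (ns s) → Fin d → ℝ :=
  LinearMap.pi fun s => LinearMap.funLeft ℝ (Fin d → ℝ) (I s)

end SubgraphEmbeddings

theorem stmt9_general {m n d : ℕ} (ns : Fin m → ℕ)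
    (I : (s : Fin m) → Fin (ns s) → Fin n)
    (Fs : (s : Fin m) → Fin (ns s) → Fin d → ℝ)
    (Ls : (s : Fin m) → Matrix (Fin (ns s)) (Fin (ns s)) ℝ)
    (hLs : ∀ s, (Ls s).PosSemidef)
    (lam γ : ℝ) (hlam : 0 < lam) (hγ : 0 ≤ γ)
    (ℓ : ((s : Fin m) → Fin (ns s) → Fin d → ℝ) → (Fin n → Fin d → ℝ) → ℝ)
    (hℓ : ∀ Y M, ℓ Y M = ∑ s,
      ((∑ i, rowSq (Y s i - Fs s i))
        + lam * (∑ i, ∑ j, Ls s i j * ∑ k, Y s i k * Y s j k)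
        + γ * ∑ i, rowSq (Y s i - M (I s i))))
    (Yseq : ℕ → (s : Fin m) → Fin (ns s) → Fin d → ℝ)
    (Mseq : ℕ → Fin n → Fin d → ℝ)
    -- alternating exact minimization, from arbitrary initialization
    (hY : ∀ k, ∀ Y', ℓ (Yseq (k + 1)) (Mseq k) ≤ ℓ Y' (Mseq k))
    (hM : ∀ k, ∀ M', ℓ (Yseq (k + 1)) (Mseq (k + 1)) ≤ ℓ (Yseq (k + 1)) M') :
    Tendsto (fun k => ℓ (Yseq k) (Mseq k)) atTop
      (nhds (sInf (Set.range
        (fun p : ((s : Fin m) → Fin (ns s) → Fin d → ℝ) × (Fin n → Fin d → ℝ) =>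
          ℓ p.1 p.2)))) := by
  have hℓ_eq : ℓ = quadEnergy frobeniusSq (laplacianForm Ls) (selectRows I) Fs lam γ := by
    ext Y M
    rw [hℓ, quadEnergy, frobeniusSq_apply, frobeniusSq_apply, laplacianForm_apply, mul_sum,
      mul_sum, ← sum_add_distrib, ← sum_add_distrib]
    rfl
  subst hℓ_eq
  exact tendsto_quadEnergy_alternating frobeniusSq_nonneg (laplacianForm_nonneg hLs) hlam.le hγ
    Yseq Mseq hY hM

/-- lower-level alternating-minimization convergence: exact
alternating minimization of `ℓ_muse` over `𝐘` and `M` drives the energy to its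
infimum. -/
theorem stmt9 {m n d : ℕ} (ns : Fin m → ℕ)
    (I : (s : Fin m) → Fin (ns s) → Fin n)
    (Fs : (s : Fin m) → Fin (ns s) → Fin d → ℝ)
    (Ls : (s : Fin m) → Matrix (Fin (ns s)) (Fin (ns s)) ℝ)
    (hLs : ∀ s, (Ls s).PosSemidef)
    (lam γ : ℝ) (hlam : 0 < lam) (hγ : 0 ≤ γ)
    (hcover : ∀ v : Fin n, ∃ s i, I s i = v)
    (ℓ : ((s : Fin m) → Fin (ns s) → Fin d → ℝ) → (Fin n → Fin d → ℝ) → ℝ)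
    (hℓ : ∀ Y M, ℓ Y M = ∑ s,
      ((∑ i, rowSq (Y s i - Fs s i))
        + lam * (∑ i, ∑ j, Ls s i j * ∑ k, Y s i k * Y s j k)
        + γ * ∑ i, rowSq (Y s i - M (I s i))))
    (Yseq : ℕ → (s : Fin m) → Fin (ns s) → Fin d → ℝ)
    (Mseq : ℕ → Fin n → Fin d → ℝ)
    -- alternating exact minimization, from arbitrary initialization
    (hY : ∀ k, ∀ Y', ℓ (Yseq (k + 1)) (Mseq k) ≤ ℓ Y' (Mseq k))
    (hM : ∀ k, ∀ M', ℓ (Yseq (k + 1)) (Mseq (k + 1)) ≤ ℓ (Yseq (k + 1)) M') :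
    Tendsto (fun k => ℓ (Yseq k) (Mseq k)) atTop
      (nhds (sInf (Set.range
        (fun p : ((s : Fin m) → Fin (ns s) → Fin d → ℝ) × (Fin n → Fin d → ℝ) =>
          ℓ p.1 p.2)))) :=
  stmt9_general ns I Fs Ls hLs lam γ hlam hγ ℓ hℓ Yseq Mseq hY hM
end
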